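/- arXiv:1707.07882 — 6 statements merged into one kernel-verified Lean document; each statement's English description precedes it below -/
import Mathlib

section
/- For all real numbers a, b, γ, δ with a > 0 and 0 < γ < δ < 1 and a + b ≥ 0, we have (a + b) / max(a, γ·a + δ·b) ≤ 1 + (1 - γ)/δ. -/
theorem stmt_0 (a b γ δ : ℝ) (ha : a > 0) (hγ : 0 < γ) (hγδ : γ < δ) (hδ : δ < 1)
    (hab : a + b ≥ 0) :
    (a + b) / max a (γ * a + δ * b) ≤ 1 + (1 - γ) / δ := by
  have hδ0 : (0:ℝ) < δ := lt_trans hγ hγδ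
  rcases le_or_gt (γ * a + δ * b) a with h | h
  · rw [max_eq_left h, div_le_iff₀ ha]
    have : (1 + (1 - γ) / δ) * a = (δ + (1 - γ)) * a / δ := by field_simp
    rw [this, le_div_iff₀ hδ0]
    nlinarith
  · rw [max_eq_right h.le, div_le_iff₀ (lt_trans ha h)]
    have : (1 + (1 - γ) / δ) * (γ * a + δ * b) = (δ + (1 - γ)) * (γ * a + δ * b) / δ := by
      field_simp
    rw [this, le_div_iff₀ hδ0]
    nlinarith
end

section
/- For every integer i ≥ 2 and every integer j ≥ i + 1, there exists ε₀ > 0 such that for all ε with 0 < ε < ε₀, (1/j + ε)² + (i-1)²·(1/i + ε)² < (j-1)²·(1/j + ε)². -/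
theorem stmt_1 (i j : ℕ) (hi : 2 ≤ i) (hj : i + 1 ≤ j) :
    ∃ ε₀ > (0 : ℝ), ∀ ε : ℝ, 0 < ε → ε < ε₀ →
      (1 / (j : ℝ) + ε) ^ 2 + ((i : ℝ) - 1) ^ 2 * (1 / (i : ℝ) + ε) ^ 2
        < ((j : ℝ) - 1) ^ 2 * (1 / (j : ℝ) + ε) ^ 2 := by
  have hi2 : (2 : ℝ) ≤ (i : ℝ) := by exact_mod_cast hi
  have hj2 : (i : ℝ) + 1 ≤ (j : ℝ) := by exact_mod_cast hj
  have hipos : (0 : ℝ) < (i : ℝ) := by linarith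
  have hjpos : (0 : ℝ) < (j : ℝ) := by linarith
  set f : ℝ → ℝ := fun ε =>
    ((j : ℝ) - 1) ^ 2 * (1 / (j : ℝ) + ε) ^ 2 -
      ((1 / (j : ℝ) + ε) ^ 2 + ((i : ℝ) - 1) ^ 2 * (1 / (i : ℝ) + ε) ^ 2) with hf
  have hc : Continuous f := by fun_prop
  have h0 : 0 < f 0 := by
    have key : (j : ℝ) ^ 2 < 2 * i * j * (j - i) := by
      have hd : (0 : ℝ) ≤ (j : ℝ) - i - 1 := by linarith
      nlinarith [mul_nonneg hd (by linarith : (0:ℝ) ≤ 2*(i:ℝ)-1),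
        mul_pos hjpos (by nlinarith [mul_nonneg hd (by linarith : (0:ℝ) ≤ 2*(i:ℝ)-1)] :
          (0:ℝ) < 2*(i:ℝ)*((j:ℝ)-(i:ℝ)) - j)]
    have h1 : (i : ℝ) ^ 2 + ((i : ℝ) - 1) ^ 2 * (j : ℝ) ^ 2
        < ((j : ℝ) - 1) ^ 2 * (i : ℝ) ^ 2 := by nlinarith
    simp only [hf, add_zero, sub_pos]
    rw [div_pow, div_pow, one_pow, mul_one_div, mul_one_div,
      div_add_div _ _ (by positivity : ((j:ℝ)^2) ≠ 0) (by positivity : ((i:ℝ)^2) ≠ 0),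
      div_lt_div_iff₀ (by positivity) (by positivity)]
    nlinarith [mul_lt_mul_of_pos_right h1 (show (0:ℝ) < (j:ℝ)^2 by positivity)]
  obtain ⟨δ, hδ, h⟩ := Metric.continuousAt_iff.mp (hc.continuousAt (x := 0)) (f 0) h0
  refine ⟨δ, hδ, fun ε hε1 hε2 => ?_⟩
  have hd : dist ε 0 < δ := by simpa [Real.dist_eq, abs_of_pos hε1] using hε2
  have := h hd
  rw [Real.dist_eq] at this
  have := abs_lt.mp this
  have hfpos : 0 < f ε := by linarith
  simp only [hf] at hfpos
  linarith
end

section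
/- The series Σ_{i=1}^{∞} (2^{i+1} - 3)/(2^i - 1)² converges, and its sum is less than 2.0761. -/
set_option maxHeartbeats 1000000

private lemma aux_le (i : ℕ) :
    ((2 : ℝ) ^ (i + 2) - 3) / ((2 : ℝ) ^ (i + 1) - 1) ^ 2 ≤ 2 * (1/2 : ℝ) ^ i := by
  have ht : (1 : ℝ) ≤ 2 ^ i := one_le_pow₀ (by norm_num)
  have hd : (0 : ℝ) < ((2 : ℝ) ^ (i + 1) - 1) ^ 2 := by
    have : (1 : ℝ) < 2 ^ (i + 1) := by
      calc (1:ℝ) ≤ 2 ^ i := ht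
      _ < 2 ^ (i+1) := by
        rw [pow_succ]; nlinarith
    have h1 : (0:ℝ) < 2 ^ (i+1) - 1 := by linarith
    exact pow_pos h1 2
  rw [div_le_iff₀ hd]
  have h2 : ((2:ℝ)^i) ^ 2 = (2:ℝ)^(2*i) := by
    rw [← pow_mul]; ring_nf
  have hp : (1/2 : ℝ) ^ i = ((2:ℝ)^i)⁻¹ := by
    rw [one_div, inv_pow]
  rw [hp]
  have h2i : (0:ℝ) < 2 ^ i := by positivity
  rw [pow_succ, pow_succ, pow_succ]
  have key : ((2:ℝ)^i * 2 * 2 - 3) * (2:ℝ)^i ≤ 2 * ((2:ℝ)^i * 2 - 1) ^ 2 := by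
    nlinarith [sq_nonneg ((2:ℝ)^i)]
  calc (2:ℝ)^i * 2 * 2 - 3 = (((2:ℝ)^i * 2 * 2 - 3) * (2:ℝ)^i) * ((2:ℝ)^i)⁻¹ := by
        field_simp
    _ ≤ (2 * ((2:ℝ)^i * 2 - 1) ^ 2) * ((2:ℝ)^i)⁻¹ := by
        apply mul_le_mul_of_nonneg_right key (by positivity)
    _ = 2 * ((2:ℝ)^i)⁻¹ * ((2:ℝ)^i * 2 - 1) ^ 2 := by ring

private lemma aux_nonneg (i : ℕ) :
    0 ≤ ((2 : ℝ) ^ (i + 2) - 3) / ((2 : ℝ) ^ (i + 1) - 1) ^ 2 := by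
  have ht : (1 : ℝ) ≤ 2 ^ i := one_le_pow₀ (by norm_num)
  apply div_nonneg
  · rw [pow_succ, pow_succ]; nlinarith
  · positivity

theorem stmt_4 :
    Summable (fun i : ℕ => ((2 : ℝ) ^ (i + 2) - 3) / ((2 : ℝ) ^ (i + 1) - 1) ^ 2) ∧
    ∑' i : ℕ, ((2 : ℝ) ^ (i + 2) - 3) / ((2 : ℝ) ^ (i + 1) - 1) ^ 2 < 2.0761 := by
  set f : ℕ → ℝ := fun i => ((2 : ℝ) ^ (i + 2) - 3) / ((2 : ℝ) ^ (i + 1) - 1) ^ 2 with hf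
  have hg : Summable (fun i : ℕ => 2 * (1/2 : ℝ) ^ i) :=
    (summable_geometric_of_lt_one (by norm_num) (by norm_num)).mul_left 2
  have hsum : Summable f :=
    Summable.of_nonneg_of_le aux_nonneg aux_le hg
  refine ⟨hsum, ?_⟩
  have hsplit := (Summable.sum_add_tsum_nat_add (f := f) 16 hsum).symm
  rw [hsplit]
  have htail_sum : Summable (fun i : ℕ => f (i + 16)) := (summable_nat_add_iff 16).2 hsum
  have hgtail : Summable (fun i : ℕ => 2 * (1/2 : ℝ) ^ (i + 16)) := (summable_nat_add_iff 16).2 hg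
  have htail : ∑' i : ℕ, f (i + 16) ≤ ∑' i : ℕ, 2 * (1/2 : ℝ) ^ (i + 16) :=
    Summable.tsum_le_tsum (fun i => aux_le (i + 16)) htail_sum hgtail
  have hgval : ∑' i : ℕ, 2 * (1/2 : ℝ) ^ (i + 16) = 1 / 16384 := by
    have : (fun i : ℕ => 2 * (1/2 : ℝ) ^ (i + 16)) =
        (fun i : ℕ => (2 * (1/2 : ℝ) ^ 16) * (1/2 : ℝ) ^ i) := by
      funext i; rw [pow_add]; ring
    rw [this, tsum_mul_left, tsum_geometric_of_lt_one (by norm_num) (by norm_num)]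
    norm_num
  have hP : ∑ i ∈ Finset.range 16, f i < 2.0761 - 1/16384 := by
    simp only [hf, Finset.sum_range_succ, Finset.sum_range_zero]
    norm_num
  linarith
end

section
/- Let x be the unique real solution in [0,1] of the equation (1 − x²)·(1 − x)² = 1/12. Then 0.62 < x < 0.63, and moreover 1 + 3/(16·(1−x)²) = 1 + 9·(1−x²)/4 ≤ 2.3605, and 9/16 ≥ 4·(1−x)². -/
private lemma root_lb (x : ℝ) (hx0 : 0 ≤ x) (hx1 : x ≤ 1)
    (h : (1 - x^2) * (1 - x)^2 = 1/12) : (0.628756 : ℝ) < x := by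
  by_contra hc
  push_neg at hc
  nlinarith [sq_nonneg (1 - x), sq_nonneg x, mul_nonneg hx0 hx0,
    mul_nonneg (mul_nonneg hx0 hx0) hx0, sq_nonneg (x - 0.628756),
    mul_nonneg (sub_nonneg.2 hc) hx0]

private lemma root_ub (x : ℝ) (hx0 : 0 ≤ x) (hx1 : x ≤ 1)
    (h : (1 - x^2) * (1 - x)^2 = 1/12) : x < (0.63 : ℝ) := by
  by_contra hc
  push_neg at hc
  nlinarith [sq_nonneg (1 - x), sq_nonneg (x - 0.63),
    mul_nonneg (sub_nonneg.2 hc) (sub_nonneg.2 hx1),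
    mul_nonneg (mul_nonneg (sub_nonneg.2 hc) (sub_nonneg.2 hx1)) (sub_nonneg.2 hx1)]

theorem stmt_6 :
    (∃! x : ℝ, x ∈ Set.Icc (0:ℝ) 1 ∧ (1 - x^2) * (1 - x)^2 = 1/12) ∧
    ∀ x : ℝ, x ∈ Set.Icc (0:ℝ) 1 → (1 - x^2) * (1 - x)^2 = 1/12 →
      0.62 < x ∧ x < 0.63 ∧
      1 + 3 / (16 * (1 - x)^2) = 1 + 9 * (1 - x^2) / 4 ∧
      1 + 3 / (16 * (1 - x)^2) ≤ 2.3605 ∧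
      9/16 ≥ 4 * (1 - x)^2 := by
  constructor
  · -- existence via IVT on [0.62, 0.63]
    have hcont : ContinuousOn (fun x : ℝ => (1 - x^2) * (1 - x)^2)
        (Set.Icc (0.62 : ℝ) 0.63) := by fun_prop
    have hivt := intermediate_value_Icc' (by norm_num : (0.62:ℝ) ≤ 0.63) hcont
    have hmem : (1/12 : ℝ) ∈ Set.Icc ((fun x : ℝ => (1 - x^2) * (1 - x)^2) 0.63)
        ((fun x : ℝ => (1 - x^2) * (1 - x)^2) 0.62) := by
      constructor <;> norm_num
    obtain ⟨x, hx, hfx⟩ := hivt hmem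
    refine ⟨x, ⟨⟨by linarith [hx.1], by linarith [hx.2]⟩, hfx⟩, ?_⟩
    rintro y ⟨⟨hy0, hy1⟩, hfy⟩
    have hxl := root_lb x (by linarith [hx.1]) (by linarith [hx.2]) hfx
    have hxu := root_ub x (by linarith [hx.1]) (by linarith [hx.2]) hfx
    have hyl := root_lb y hy0 hy1 hfy
    have hyu := root_ub y hy0 hy1 hfy
    -- strict antitone on [0.628756, 0.63]
    have hfx' : (1 - x^2) * (1 - x)^2 = 1/12 := hfx
    have hg : 0 < 2 - 2*(x^2 + x*y + y^2) + (x + y)*(x^2 + y^2) := by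
      nlinarith [mul_nonneg (sub_nonneg.2 hxu.le) (sub_nonneg.2 hyu.le),
        mul_nonneg (mul_nonneg (sub_nonneg.2 hxu.le) (sub_nonneg.2 hyu.le)) (sub_nonneg.2 hyu.le)]
    have h0 : (y - x) * (2 - 2*(x^2 + x*y + y^2) + (x + y)*(x^2 + y^2)) = 0 := by
      linear_combination hfx' - hfy
    rcases mul_eq_zero.1 h0 with h' | h'
    · linarith
    · linarith
  · rintro x ⟨hx0, hx1⟩ h
    have hl := root_lb x hx0 hx1 h
    have hu := root_ub x hx0 hx1 h
    have h1x : (1 - x) ≠ 0 := by intro h0; rw [h0] at h; norm_num at h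
    have h1x2 : (0:ℝ) < (1 - x)^2 := by positivity
    refine ⟨by linarith, hu, ?_, ?_, ?_⟩
    · field_simp
      nlinarith [h]
    · have heq : 1 + 3 / (16 * (1 - x)^2) = 1 + 9 * (1 - x^2) / 4 := by
        field_simp
        nlinarith [h]
      rw [heq]
      nlinarith [sq_nonneg (x - 0.628756)]
    · nlinarith
end

section
/- Let S be a finite set of squares each of side at most 1/m, where m ≥ 2 is an integer. If the total area of S is at most 1/m² + (1 − 1/m)², then S can be packed in the unit square. -/
/-!
Shelf packing (Meir–Moser). Put the largest square, of side `a`, in a corner and process the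
remaining squares in decreasing order, filling horizontal shelves from left to right; a shelf
is as high as its first square, and a square that does not fit opens a new shelf. When a shelf
is closed by a square of side `h'`, the squares on it have widths summing to more than `1 - h'`
and heights at least `h'`, so they cover area at least `(1 - a) h'`. Hence the shelves above the
largest square can only outgrow the unit square if the total area exceeds `a² + (1 - a)²`.
-/

open Set Finset Function

def openSquare (p : ℝ × ℝ) (t : ℝ) : Set (ℝ × ℝ) :=
  Ioo p.1 (p.1 + t) ×ˢ Ioo p.2 (p.2 + t)

def InUnitSquare (p : ℝ × ℝ) (t : ℝ) : Prop :=
  0 ≤ p.1 ∧ p.1 + t ≤ 1 ∧ 0 ≤ p.2 ∧ p.2 + t ≤ 1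

/-- `pos i` is the lower left corner of the square of side `s i`. -/
def IsPacking {ι : Type*} (S : Finset ι) (s : ι → ℝ) (pos : ι → ℝ × ℝ) : Prop :=
  (∀ i ∈ S, InUnitSquare (pos i) (s i)) ∧
    (S : Set ι).Pairwise fun i j => Disjoint (openSquare (pos i) (s i)) (openSquare (pos j) (s j))

/-- The corner `p` lies on the current shelf (bottom `y`, height `h`) to the right of `x`,
or above that shelf. -/
def AboveShelf (y h x : ℝ) (p : ℝ × ℝ) : Prop :=
  (p.2 = y ∧ x ≤ p.1) ∨ y + h ≤ p.2

lemma disjoint_openSquare_of_fst_le {p q : ℝ × ℝ} {t u : ℝ} (h : p.1 + t ≤ q.1) :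
    Disjoint (openSquare p t) (openSquare q u) :=
  Set.disjoint_left.2 fun _ hp hq => by
    simp only [openSquare, mem_prod, Set.mem_Ioo] at hp hq; linarith

lemma disjoint_openSquare_of_snd_le {p q : ℝ × ℝ} {t u : ℝ} (h : p.2 + t ≤ q.2) :
    Disjoint (openSquare p t) (openSquare q u) :=
  Set.disjoint_left.2 fun _ hp hq => by
    simp only [openSquare, mem_prod, Set.mem_Ioo] at hp hq; linarith

lemma AboveShelf.disjoint_openSquare {y h x t u : ℝ} {p q : ℝ × ℝ} (hq : AboveShelf y h x q)
    (hpy : p.2 = y) (hpx : p.1 + t ≤ x) (ht : t ≤ h) :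
    Disjoint (openSquare p t) (openSquare q u) := by
  rcases hq with ⟨-, hx⟩ | hy
  · exact disjoint_openSquare_of_fst_le (hpx.trans hx)
  · exact disjoint_openSquare_of_snd_le (by linarith)

lemma AboveShelf.anti_right {y h x x' : ℝ} {p : ℝ × ℝ} (hp : AboveShelf y h x' p) (hx : x ≤ x') :
    AboveShelf y h x p :=
  hp.imp_left fun ⟨hy, hx'⟩ => ⟨hy, hx.trans hx'⟩

lemma AboveShelf.le_snd {y h x : ℝ} {p : ℝ × ℝ} (hp : AboveShelf y h x p) (hh : 0 ≤ h) :
    y ≤ p.2 := by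
  rcases hp with ⟨hy, -⟩ | hy <;> linarith

lemma forall_mem_insert_update {ι β : Type*} [DecidableEq ι] {P : ι → β → Prop} {S : Finset ι}
    {i : ι} {f : ι → β} {b : β} (hi : i ∉ S) (hb : P i b) (hf : ∀ j ∈ S, P j (f j)) :
    ∀ j ∈ insert i S, P j (update f i b j) := by
  refine Finset.forall_mem_insert _ _ _ |>.2 ⟨by simpa, fun j hj => ?_⟩
  rw [update_of_ne (ne_of_mem_of_not_mem hj hi)]
  exact hf j hj

lemma IsPacking.empty {ι : Type*} (s : ι → ℝ) (pos : ι → ℝ × ℝ) : IsPacking ∅ s pos := by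
  simp [IsPacking]

lemma IsPacking.insert {ι : Type*} [DecidableEq ι] {S : Finset ι} {s : ι → ℝ}
    {pos : ι → ℝ × ℝ} {i : ι} {q : ℝ × ℝ} (hP : IsPacking S s pos) (hi : i ∉ S)
    (hq : InUnitSquare q (s i))
    (hdisj : ∀ j ∈ S, Disjoint (openSquare q (s i)) (openSquare (pos j) (s j))) :
    IsPacking (insert i S) s (update pos i q) := by
  have hne {j} (hj : j ∈ S) : j ≠ i := ne_of_mem_of_not_mem hj hi
  refine ⟨forall_mem_insert_update (P := fun j p => InUnitSquare p (s j)) hi hq hP.1, ?_⟩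
  rw [coe_insert, Set.pairwise_insert]
  refine ⟨fun j hj k hk hjk => ?_, fun j hj _ => ?_⟩
  · dsimp only
    rw [update_of_ne (hne hj), update_of_ne (hne hk)]
    exact hP.2 hj hk hjk
  · rw [update_self, update_of_ne (hne hj)]
    exact ⟨hdisj j hj, (hdisj j hj).symm⟩

/-- The hypothesis `hinv` is the invariant of the shelf algorithm, with `a` the side of the
largest square: `(1 - a) * (y + h - a)` is dominated by the area of the closed shelves and
`(x - h) * s i` by the area of the squares on the current shelf. -/
theorem exists_isPacking_aboveShelf {ι : Type*} {a : ℝ} (ha : a < 1) (s : ι → ℝ) (S : Finset ι)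
    (hs : ∀ i ∈ S, 0 ≤ s i) {y h x : ℝ} (hy : 0 ≤ y) (hha : h ≤ a) (hyh : y + h ≤ 1)
    (hhx : h ≤ x) (hsh : ∀ i ∈ S, s i ≤ h)
    (hinv : ∀ i ∈ S, (1 - a) * (y + h - a) + (x - h) * s i + ∑ j ∈ S, s j ^ 2 ≤ (1 - a) ^ 2) :
    ∃ pos, IsPacking S s pos ∧ ∀ i ∈ S, AboveShelf y h x (pos i) := by
  classical
  induction S using Finset.induction_on_max_value s generalizing y h x with
  | empty => exact ⟨fun _ => 0, IsPacking.empty s _, by simp⟩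
  | insert i S hi hmax ih =>
    have hsi : 0 ≤ s i := hs i (mem_insert_self i S)
    have hinv_i := hinv i (mem_insert_self i S)
    rw [sum_insert hi] at hinv_i
    have hsih := hsh i (mem_insert_self i S)
    by_cases hfit : x + s i ≤ 1
    · obtain ⟨pos, hP, hA⟩ := ih (fun j hj => hs j (mem_insert_of_mem hj)) hy hha hyh
        (hhx.trans (le_add_of_nonneg_right hsi))
        (fun j hj => (hmax j hj).trans hsih) fun j hj => by
          nlinarith [mul_nonneg (sub_nonneg.2 hhx) (sub_nonneg.2 (hmax j hj)),
            mul_nonneg hsi (sub_nonneg.2 (hmax j hj))]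
      refine ⟨update pos i (x, y), hP.insert hi ?_ fun j hj => ?_, ?_⟩
      · exact ⟨by linarith, hfit, hy, by linarith⟩
      · exact (hA j hj).disjoint_openSquare rfl le_rfl hsih
      · exact forall_mem_insert_update hi (Or.inl ⟨rfl, le_rfl⟩) fun j hj => (hA j hj).anti_right
          (le_add_of_nonneg_right hsi)
    · -- the shelf being closed is wider than `1 - s i` and at least `s i` high
      have key : (1 - a) * (y + h + s i - a) + ∑ j ∈ S, s j ^ 2 ≤ (1 - a) ^ 2 := by
        nlinarith [mul_nonneg hsi (by linarith : 0 ≤ x + s i - 1 + (a - h))]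
      have htop : y + h + s i ≤ 1 := by
        have hsum : 0 ≤ ∑ j ∈ S, s j ^ 2 := sum_nonneg fun j _ => sq_nonneg (s j)
        have : (1 - a) * (y + h + s i - a) ≤ (1 - a) * (1 - a) := by rw [← sq]; linarith
        linarith [le_of_mul_le_mul_left this (sub_pos.2 ha)]
      obtain ⟨pos, hP, hA⟩ := ih (y := y + h) (h := s i) (x := s i)
        (fun j hj => hs j (mem_insert_of_mem hj)) (by linarith) (hsih.trans hha) htop le_rfl hmax
        fun j hj => by rw [sub_self, zero_mul, add_zero]; exact key
      refine ⟨update pos i (0, y + h), hP.insert hi ?_ fun j hj => ?_, ?_⟩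
      · exact ⟨le_rfl, by linarith, by linarith, htop⟩
      · exact (hA j hj).disjoint_openSquare rfl (zero_add _).le le_rfl
      · exact forall_mem_insert_update hi (Or.inr le_rfl) fun j hj => Or.inr ((hA j hj).le_snd hsi)

theorem exists_isPacking_of_sum_sq_le_of_isMax {ι : Type*} [DecidableEq ι] (s : ι → ℝ)
    (S : Finset ι) (hs : ∀ i ∈ S, 0 ≤ s i) {i₀ : ι} (hi₀ : i₀ ∈ S) (hmax : ∀ i ∈ S, s i ≤ s i₀)
    (hlt : s i₀ < 1) (harea : ∑ i ∈ S, s i ^ 2 ≤ s i₀ ^ 2 + (1 - s i₀) ^ 2) :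
    ∃ pos, IsPacking S s pos := by
  have hsplit := add_sum_erase S (fun i => s i ^ 2) hi₀
  obtain ⟨pos, hP, hA⟩ := exists_isPacking_aboveShelf hlt s (S.erase i₀)
    (fun i hi => hs i (mem_of_mem_erase hi)) le_rfl le_rfl (by linarith) le_rfl
    (fun i hi => hmax i (mem_of_mem_erase hi)) fun i hi => by
      simp only [zero_add, sub_self, zero_mul, mul_zero]; linarith
  refine ⟨update pos i₀ 0, ?_⟩
  rw [← insert_erase hi₀]
  refine hP.insert (notMem_erase i₀ S) ⟨le_rfl, ?_, le_rfl, ?_⟩ fun j hj => ?_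
  · simpa using hlt.le
  · simpa using hlt.le
  · exact (hA j hj).disjoint_openSquare rfl (zero_add _).le le_rfl

theorem exists_isPacking_of_sum_sq_le {ι : Type*} (s : ι → ℝ) (S : Finset ι) {ℓ : ℝ}
    (hℓ : ℓ ≤ 1 / 2) (hs : ∀ i ∈ S, 0 ≤ s i) (hsℓ : ∀ i ∈ S, s i ≤ ℓ)
    (harea : ∑ i ∈ S, s i ^ 2 ≤ ℓ ^ 2 + (1 - ℓ) ^ 2) :
    ∃ pos, IsPacking S s pos := by
  classical
  rcases S.eq_empty_or_nonempty with rfl | hne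
  · exact ⟨0, IsPacking.empty s 0⟩
  obtain ⟨i₀, hi₀, hmax⟩ := S.exists_max_image s hne
  have ha := hsℓ i₀ hi₀
  refine exists_isPacking_of_sum_sq_le_of_isMax s S hs hi₀ hmax (by linarith) ?_
  nlinarith [mul_nonneg (sub_nonneg.2 ha) (by linarith : 0 ≤ 1 - ℓ - s i₀)]

theorem stmt_15 (m : ℕ) (hm : 2 ≤ m) (n : ℕ) (s : Fin n → ℝ)
    (hs : ∀ i, 0 < s i) (hsm : ∀ i, s i ≤ 1 / m)
    (harea : ∑ i, (s i) ^ 2 ≤ 1 / (m : ℝ) ^ 2 + (1 - 1 / m) ^ 2) :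
    ∃ pos : Fin n → ℝ × ℝ,
      (∀ i, 0 ≤ (pos i).1 ∧ (pos i).1 + s i ≤ 1 ∧ 0 ≤ (pos i).2 ∧ (pos i).2 + s i ≤ 1) ∧
      ∀ i j, i ≠ j →
        (Set.Ioo (pos i).1 ((pos i).1 + s i) ×ˢ Set.Ioo (pos i).2 ((pos i).2 + s i)) ∩
        (Set.Ioo (pos j).1 ((pos j).1 + s j) ×ˢ Set.Ioo (pos j).2 ((pos j).2 + s j)) = ∅ := by
  have hm' : 1 / (m : ℝ) ≤ 1 / 2 := one_div_le_one_div_of_le two_pos (by exact_mod_cast hm)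
  obtain ⟨pos, hin, hdisj⟩ := exists_isPacking_of_sum_sq_le s univ hm'
    (fun i _ => (hs i).le) (fun i _ => hsm i) (by rwa [div_pow, one_pow])
  exact ⟨pos, fun i => hin i (mem_univ i), fun i j hij =>
    Set.disjoint_iff_inter_eq_empty.1 (hdisj (mem_univ i) (mem_univ j) hij)⟩
end

section
/- Let B, M, S ≥ 0 and OPT > 0 be reals, let x be the root in (0,1) of (1−x²)(1−x)² = 1/12. If OPT ≥ B and OPT ≥ (1/4)·B + 4(1−x)²·(M + S), then (B + M + S)/OPT ≤ 1 + 3/(16(1−x)²) ≤ 2.3605. Alternatively, if OPT ≥ B and OPT ≥ x²·B + (4/9)·(M + S), then (B + M + S)/OPT ≤ 1 + 9(1−x²)/4 ≤ 2.3605. -/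
theorem stmt_18 (B M S OPT x : ℝ) (hB : 0 ≤ B) (hM : 0 ≤ M) (hS : 0 ≤ S)
    (hO : 0 < OPT) (hx0 : 0 < x) (hx1 : x < 1)
    (hroot : (1 - x^2) * (1 - x)^2 = 1/12) :
    (OPT ≥ B → OPT ≥ (1/4) * B + 4 * (1 - x)^2 * (M + S) →
      (B + M + S) / OPT ≤ 1 + 3 / (16 * (1 - x)^2) ∧
      1 + 3 / (16 * (1 - x)^2) ≤ 2.3605) ∧
    (OPT ≥ B → OPT ≥ x^2 * B + (4/9) * (M + S) →
      (B + M + S) / OPT ≤ 1 + 9 * (1 - x^2) / 4 ∧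
      1 + 9 * (1 - x^2) / 4 ≤ 2.3605) := by
  have hu : (0:ℝ) < 1 - x := by linarith
  have hlo : (628758:ℝ)/1000000 ≤ x := by
    nlinarith [hroot, sq_nonneg (x - 628758/1000000), sq_nonneg (x + 628758/1000000),
      mul_pos hx0 hu, sq_nonneg x, mul_pos hx0 hx0]
  have hhi : x ≤ (628761:ℝ)/1000000 := by
    nlinarith [hroot, sq_nonneg (x - 628761/1000000), sq_nonneg (x + 628761/1000000),
      mul_pos hx0 hu, sq_nonneg x, mul_pos hx0 hx0]
  have hu2 : (0:ℝ) < (1 - x)^2 := by positivity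
  constructor
  · intro h1 h2
    have hδ : (1:ℝ) < 16 * (1 - x)^2 := by nlinarith
    constructor
    · rw [div_le_iff₀ hO]
      have key : (B + M + S) * (16 * (1 - x)^2) ≤ (16 * (1 - x)^2 + 3) * OPT := by
        nlinarith [mul_nonneg (sub_nonneg.2 h1) (by linarith : (0:ℝ) ≤ 16 * (1 - x)^2 - 1)]
      have heq : (1 + 3 / (16 * (1 - x)^2)) * OPT
          = ((16 * (1 - x)^2 + 3) * OPT) / (16 * (1 - x)^2) := by
        field_simp
      rw [heq, le_div_iff₀ (by positivity)]
      linarith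
    · have h3 : 3 / (16 * (1 - x)^2) ≤ 1.3605 := by
        rw [div_le_iff₀ (by positivity)]
        nlinarith
      norm_num at h3 ⊢
      linarith
  · intro h1 h2
    constructor
    · rw [div_le_iff₀ hO]
      nlinarith [mul_nonneg (sub_nonneg.2 h1) (by nlinarith : (0:ℝ) ≤ 1 - 9/4 * x^2)]
    · nlinarith
end
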